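/- arXiv:2106.05222 — 9 statements merged into one kernel-verified Lean document; each statement's English description precedes it below -/
import Mathlib

section
/- Let A, Q, Z_1, …, Z_n be random variables taking values in finite sets on a common probability space. Suppose that H(Z_i | A, Q) = 0 for every i ∈ {1,…,n}, and that the tuple (Z_1,…,Z_n) is independent of Q. Then H(A) ≥ Σ_{i=1}^{n} H(Z_i | Z_1,…,Z_{i-1}) = H(Z_1,…,Z_n). -/
open Classical

noncomputable section

/-- Probability that the random variable `f` takes the value `a`, under the pmf `p`. -/
def prEq {Ω : Type} {α : Type*} [Fintype Ω] (p : Ω → ℝ) (f : Ω → α) (a : α) : ℝ :=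
  ∑ ω, if f ω = a then p ω else 0

/-- Shannon entropy of the finitely valued random variable `f` under the pmf `p`. -/
def entH {Ω : Type} {α : Type*} [Fintype Ω] (p : Ω → ℝ) (f : Ω → α) : ℝ :=
  -∑ ω, p ω * Real.log (prEq p f (f ω))

/-- Conditional Shannon entropy `H(f | g) = H(f, g) - H(g)`. -/
def condH {Ω : Type} {α β : Type*} [Fintype Ω] (p : Ω → ℝ) (f : Ω → α) (g : Ω → β) : ℝ :=
  entH p (fun ω => (f ω, g ω)) - entH p g

/-- `f` and `g` are independent random variables. -/
def indepPair {Ω : Type} {α β : Type*} [Fintype Ω] (p : Ω → ℝ) (f : Ω → α) (g : Ω → β) :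
    Prop :=
  ∀ a b, prEq p (fun ω => (f ω, g ω)) (a, b) = prEq p f a * prEq p g b

/-!
Each `Z i` is a function of `(A, Q)` on the support of `p`, hence so is the tuple `Z`, and
`H(Z, A, Q) = H(A, Q)`. Independence, monotonicity and subadditivity of entropy then give
`H(Z) + H(Q) = H(Z, Q) ≤ H(Z, A, Q) = H(A, Q) ≤ H(A) + H(Q)`. Subadditivity is Gibbs'
inequality, i.e. `log x ≤ x - 1` summed against `p`; the equality with the sum of conditional
entropies is the chain rule, a telescoping sum over prefixes of the tuple.
-/

open Real Finset

section
variable {Ω : Type} [Fintype Ω] {p : Ω → ℝ}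

lemma prEq_nonneg (hp0 : ∀ ω, 0 ≤ p ω) {α : Type*} (f : Ω → α) (a : α) : 0 ≤ prEq p f a :=
  sum_nonneg fun ω _ => by split <;> simp [hp0 ω]

lemma le_prEq_self (hp0 : ∀ ω, 0 ≤ p ω) {α : Type*} (f : Ω → α) (ω : Ω) :
    p ω ≤ prEq p f (f ω) := by
  have := single_le_sum (f := fun ω' => if f ω' = f ω then p ω' else 0)
    (fun ω' _ => by split <;> simp [hp0 ω']) (mem_univ ω)
  simpa [prEq] using this

lemma prEq_self_pos (hp0 : ∀ ω, 0 ≤ p ω) {α : Type*} (f : Ω → α) {ω : Ω} (hω : p ω ≠ 0) :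
    0 < prEq p f (f ω) :=
  ((hp0 ω).lt_of_ne' hω).trans_le (le_prEq_self hp0 f ω)

lemma prEq_sub_prEq_pair {α β : Type*} (f : Ω → α) (g : Ω → β) (a : α) (b : β) :
    prEq p g b - prEq p (fun ω => (f ω, g ω)) (a, b) =
      ∑ ω, if g ω = b ∧ f ω ≠ a then p ω else 0 := by
  simp only [prEq, ← sum_sub_distrib, Prod.ext_iff]
  refine sum_congr rfl fun ω _ => ?_
  by_cases hg : g ω = b <;> by_cases hf : f ω = a <;> simp [hf, hg]

lemma prEq_pair_le_right (hp0 : ∀ ω, 0 ≤ p ω) {α β : Type*} (f : Ω → α) (g : Ω → β)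
    (a : α) (b : β) : prEq p (fun ω => (f ω, g ω)) (a, b) ≤ prEq p g b := by
  rw [← sub_nonneg, prEq_sub_prEq_pair]
  exact sum_nonneg fun ω _ => by split <;> simp [hp0 ω]

lemma sum_mul_comp_eq_sum_image {α : Type*} [DecidableEq α] (f : Ω → α) (F : α → ℝ) :
    ∑ ω, p ω * F (f ω) = ∑ a ∈ univ.image f, prEq p f a * F a := by
  rw [← sum_fiberwise_of_maps_to (g := f) (t := univ.image f)
    fun ω _ => mem_image_of_mem f (mem_univ ω)]
  refine sum_congr rfl fun a _ => ?_
  rw [prEq, sum_mul, sum_filter]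
  exact sum_congr rfl fun ω _ => by split_ifs with h <;> simp [h]

lemma sum_prEq_image (hp1 : ∑ ω, p ω = 1) {α : Type*} [DecidableEq α] (f : Ω → α) :
    ∑ a ∈ univ.image f, prEq p f a = 1 := by
  simpa [hp1] using (sum_mul_comp_eq_sum_image (p := p) f fun _ => 1).symm

lemma sum_mul_congr_of_ne_zero {F G : Ω → ℝ} (h : ∀ ω, p ω ≠ 0 → F ω = G ω) :
    ∑ ω, p ω * F ω = ∑ ω, p ω * G ω :=
  sum_congr rfl fun ω _ => by
    by_cases hω : p ω = 0
    · simp [hω]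
    · rw [h ω hω]

lemma sum_mul_le_of_ne_zero (hp0 : ∀ ω, 0 ≤ p ω) {F G : Ω → ℝ}
    (h : ∀ ω, p ω ≠ 0 → F ω ≤ G ω) : ∑ ω, p ω * F ω ≤ ∑ ω, p ω * G ω :=
  sum_le_sum fun ω _ => by
    by_cases hω : p ω = 0
    · simp [hω]
    · exact mul_le_mul_of_nonneg_left (h ω hω) (hp0 ω)

lemma entH_comp_injective {α β : Type*} (f : Ω → α) {e : α → β} (he : Function.Injective e) :
    entH p (fun ω => e (f ω)) = entH p f := by
  simp only [entH, prEq, he.eq_iff]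

lemma entH_eq_zero_of_subsingleton (hp1 : ∑ ω, p ω = 1) {α : Type*} [Subsingleton α]
    (f : Ω → α) : entH p f = 0 := by
  have h1 : ∀ ω, prEq p f (f ω) = 1 := fun ω => by
    simp [prEq, Subsingleton.elim (f _) (f ω), hp1]
  simp [entH, h1]

def IsDeterminedBy {α β : Type*} (p : Ω → ℝ) (f : Ω → α) (g : Ω → β) : Prop :=
  ∀ ω ω', p ω ≠ 0 → p ω' ≠ 0 → g ω = g ω' → f ω = f ω'

lemma condH_eq_sum {α β : Type*} (f : Ω → α) (g : Ω → β) :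
    condH p f g = ∑ ω, p ω *
      (log (prEq p g (g ω)) - log (prEq p (fun ω => (f ω, g ω)) (f ω, g ω))) := by
  simp only [condH, entH, mul_sub, sum_sub_distrib]
  ring

lemma condH_summand_nonneg (hp0 : ∀ ω, 0 ≤ p ω) {α β : Type*} (f : Ω → α) (g : Ω → β)
    (ω : Ω) :
    0 ≤ p ω * (log (prEq p g (g ω)) - log (prEq p (fun ω => (f ω, g ω)) (f ω, g ω))) := by
  by_cases hω : p ω = 0
  · simp [hω]
  · exact mul_nonneg (hp0 ω) <| sub_nonneg.2 <|
      log_le_log (prEq_self_pos hp0 _ hω) (prEq_pair_le_right hp0 f g _ _)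

lemma entH_le_entH_pair (hp0 : ∀ ω, 0 ≤ p ω) {α β : Type*} (f : Ω → α) (g : Ω → β) :
    entH p g ≤ entH p (fun ω => (f ω, g ω)) := by
  rw [← sub_nonneg, ← condH, condH_eq_sum]
  exact sum_nonneg fun ω _ => condH_summand_nonneg hp0 f g ω

lemma condH_eq_zero_iff_prEq_pair_eq (hp0 : ∀ ω, 0 ≤ p ω) {α β : Type*} (f : Ω → α)
    (g : Ω → β) : condH p f g = 0 ↔
      ∀ ω, p ω ≠ 0 → prEq p (fun ω => (f ω, g ω)) (f ω, g ω) = prEq p g (g ω) := by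
  rw [condH_eq_sum, sum_eq_zero_iff_of_nonneg fun ω _ => condH_summand_nonneg hp0 f g ω]
  refine forall_congr' fun ω => ?_
  rw [forall_prop_of_true (mem_univ ω), mul_eq_zero, sub_eq_zero, or_iff_not_imp_left]
  refine imp_congr_right fun hω => ⟨fun h => (log_injOn_pos ?_ ?_ h).symm, fun h => by rw [h]⟩
  · exact prEq_self_pos hp0 g hω
  · exact prEq_self_pos hp0 (fun ω => (f ω, g ω)) hω

lemma prEq_pair_eq_iff (hp0 : ∀ ω, 0 ≤ p ω) {α β : Type*} (f : Ω → α) (g : Ω → β)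
    (a : α) (b : β) : prEq p (fun ω => (f ω, g ω)) (a, b) = prEq p g b ↔
      ∀ ω, g ω = b → f ω ≠ a → p ω = 0 := by
  rw [eq_comm, ← sub_eq_zero, prEq_sub_prEq_pair,
    sum_eq_zero_iff_of_nonneg fun ω _ => by split <;> simp [hp0 ω]]
  refine forall_congr' fun ω => ?_
  split_ifs with h <;> simp_all

lemma condH_eq_zero_iff (hp0 : ∀ ω, 0 ≤ p ω) {α β : Type*} (f : Ω → α) (g : Ω → β) :
    condH p f g = 0 ↔ IsDeterminedBy p f g := by
  simp only [condH_eq_zero_iff_prEq_pair_eq hp0, prEq_pair_eq_iff hp0, IsDeterminedBy]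
  constructor
  · intro h ω ω' hω hω' hg
    by_contra hf
    exact hω' (h ω hω ω' hg.symm (Ne.symm hf))
  · intro h ω hω ω' hg hf
    by_contra hω'
    exact hf (h ω' ω hω' hω hg)

lemma entH_pair_of_indepPair (hp0 : ∀ ω, 0 ≤ p ω) {α β : Type*} (f : Ω → α) (g : Ω → β)
    (h : indepPair p f g) : entH p (fun ω => (f ω, g ω)) = entH p f + entH p g := by
  have hlog : ∑ ω, p ω * log (prEq p (fun ω => (f ω, g ω)) (f ω, g ω)) =
      ∑ ω, p ω * (log (prEq p f (f ω)) + log (prEq p g (g ω))) :=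
    sum_mul_congr_of_ne_zero fun ω hω => by
      rw [h, log_mul (prEq_self_pos hp0 f hω).ne' (prEq_self_pos hp0 g hω).ne']
  simp only [entH, hlog, mul_add, sum_add_distrib]
  ring

lemma sum_mul_prEq_div_prEq_pair_le_one (hp0 : ∀ ω, 0 ≤ p ω) (hp1 : ∑ ω, p ω = 1)
    {α β : Type*} (f : Ω → α) (g : Ω → β) :
    ∑ ω, p ω * (prEq p f (f ω) * prEq p g (g ω) /
      prEq p (fun ω => (f ω, g ω)) (f ω, g ω)) ≤ 1 := by
  set h : Ω → α × β := fun ω => (f ω, g ω)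
  have hprod : ∀ x : α × β, 0 ≤ prEq p f x.1 * prEq p g x.2 := fun x =>
    mul_nonneg (prEq_nonneg hp0 f x.1) (prEq_nonneg hp0 g x.2)
  have hsub : univ.image h ⊆ univ.image f ×ˢ univ.image g := by
    intro x hx
    obtain ⟨ω, -, rfl⟩ := mem_image.1 hx
    exact mem_product.2 ⟨mem_image_of_mem f (mem_univ ω), mem_image_of_mem g (mem_univ ω)⟩
  calc ∑ ω, p ω * (prEq p f (f ω) * prEq p g (g ω) / prEq p h (h ω))
      = ∑ x ∈ univ.image h, prEq p h x * (prEq p f x.1 * prEq p g x.2 / prEq p h x) :=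
        sum_mul_comp_eq_sum_image h fun x => prEq p f x.1 * prEq p g x.2 / prEq p h x
    _ ≤ ∑ x ∈ univ.image h, prEq p f x.1 * prEq p g x.2 := sum_le_sum fun x _ => by
        rcases (prEq_nonneg hp0 h x).eq_or_lt with h0 | hpos
        · simp [← h0, hprod x]
        · rw [mul_div_cancel₀ _ hpos.ne']
    _ ≤ ∑ x ∈ univ.image f ×ˢ univ.image g, prEq p f x.1 * prEq p g x.2 :=
        sum_le_sum_of_subset_of_nonneg hsub fun x _ _ => hprod x
    _ = 1 := by
        rw [sum_product, ← sum_mul_sum, sum_prEq_image hp1, sum_prEq_image hp1, one_mul]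

lemma entH_pair_le_add (hp0 : ∀ ω, 0 ≤ p ω) (hp1 : ∑ ω, p ω = 1) {α β : Type*}
    (f : Ω → α) (g : Ω → β) : entH p (fun ω => (f ω, g ω)) ≤ entH p f + entH p g := by
  set r : Ω → ℝ := fun ω => prEq p (fun ω => (f ω, g ω)) (f ω, g ω)
  set u : Ω → ℝ := fun ω => prEq p f (f ω) * prEq p g (g ω) / r ω
  have hgibbs : ∀ ω, p ω ≠ 0 →
      log (prEq p f (f ω)) + log (prEq p g (g ω)) - log (r ω) ≤ u ω - 1 := fun ω hω => by
    have hf := prEq_self_pos hp0 f hω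
    have hg := prEq_self_pos hp0 g hω
    have hr : 0 < r ω := prEq_self_pos hp0 _ hω
    rw [← log_mul hf.ne' hg.ne', ← log_div (mul_pos hf hg).ne' hr.ne']
    exact log_le_sub_one_of_pos (div_pos (mul_pos hf hg) hr)
  have hsum := sum_mul_le_of_ne_zero hp0 hgibbs
  have hu : ∑ ω, p ω * u ω ≤ 1 := sum_mul_prEq_div_prEq_pair_le_one hp0 hp1 f g
  simp only [mul_sub, mul_add, sum_sub_distrib, sum_add_distrib, mul_one, hp1] at hsum
  simp only [entH]
  linarith

lemma entH_pi_fin_succ {k : ℕ} {β : Fin (k + 1) → Type*} (X : ∀ j, Ω → β j) :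
    entH p (fun ω j => X j ω) =
      entH p (fun ω => (X (Fin.last k) ω, fun j : Fin k => X j.castSucc ω)) := by
  refine (entH_comp_injective (fun ω j => X j ω)
    (e := fun v => (v (Fin.last k), fun j : Fin k => v j.castSucc))
    fun v w hvw => funext fun j => ?_).symm
  induction j using Fin.lastCases with
  | last => exact congrArg Prod.fst hvw
  | cast j => exact congrFun (congrArg Prod.snd hvw) j

lemma sum_condH_prefix_eq_entH_pi (hp1 : ∑ ω, p ω = 1) {n : ℕ} {α : Fin n → Type*}
    (Z : ∀ i, Ω → α i) :
    ∑ i, condH p (Z i) (fun ω (j : Fin i.1) => Z (Fin.castLE i.isLt.le j) ω) =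
      entH p (fun ω i => Z i ω) := by
  set H : ℕ → ℝ := fun k =>
    if hk : k ≤ n then entH p (fun ω (j : Fin k) => Z (Fin.castLE hk j) ω) else 0
  have hstep : ∀ i : Fin n,
      condH p (Z i) (fun ω (j : Fin i.1) => Z (Fin.castLE i.isLt.le j) ω) = H (i + 1) - H i := by
    intro i
    have hi : (i : ℕ) + 1 ≤ n := i.isLt
    simp only [H, dif_pos hi, dif_pos i.isLt.le, condH,
      entH_pi_fin_succ fun j => Z (Fin.castLE hi j)]
    rfl
  rw [sum_congr rfl fun i _ => hstep i, Fin.sum_univ_eq_sum_range (fun i => H (i + 1) - H i),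
    sum_range_sub]
  simp only [H, dif_pos le_rfl, dif_pos (Nat.zero_le n), entH_eq_zero_of_subsingleton hp1,
    sub_zero]
  rfl

end

theorem entropy_answer_ge_chain_sum_general
    {Ω : Type} [Fintype Ω] (p : Ω → ℝ) (hp0 : ∀ ω, 0 ≤ p ω) (hp1 : ∑ ω, p ω = 1)
    {n : ℕ} {α : Fin n → Type}
    {A : Type} {Qv : Type}
    (fA : Ω → A) (fQ : Ω → Qv) (Z : ∀ i : Fin n, Ω → α i)
    (hzero : ∀ i, condH p (Z i) (fun ω => (fA ω, fQ ω)) = 0)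
    (hindep : indepPair p (fun ω => (fun i => Z i ω)) fQ) :
    (∑ i, condH p (Z i) (fun ω => (fun j : Fin i.1 => Z (Fin.castLE i.isLt.le j) ω)))
        ≤ entH p fA ∧
    (∑ i, condH p (Z i) (fun ω => (fun j : Fin i.1 => Z (Fin.castLE i.isLt.le j) ω)))
        = entH p (fun ω => (fun i => Z i ω)) := by
  have hchain := sum_condH_prefix_eq_entH_pi hp1 Z
  refine ⟨?_, hchain⟩
  set Zt : Ω → ∀ i, α i := fun ω i => Z i ω
  have hdet : IsDeterminedBy p Zt (fun ω => (fA ω, fQ ω)) :=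
    fun ω ω' hω hω' hg => funext fun i => (condH_eq_zero_iff hp0 _ _).1 (hzero i) ω ω' hω hω' hg
  rw [hchain]
  calc entH p Zt = entH p (fun ω => (Zt ω, fQ ω)) - entH p fQ := by
        rw [entH_pair_of_indepPair hp0 _ _ hindep, add_sub_cancel_right]
    _ ≤ entH p (fun ω => (fA ω, Zt ω, fQ ω)) - entH p fQ :=
        sub_le_sub_right (entH_le_entH_pair hp0 _ _) _
    _ = entH p (fun ω => (Zt ω, fA ω, fQ ω)) - entH p fQ := by
        rw [← entH_comp_injective (fun ω => (Zt ω, fA ω, fQ ω))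
          (e := fun x => (x.2.1, x.1, x.2.2)) fun x y h => by simp_all [Prod.ext_iff]]
    _ = entH p (fun ω => (fA ω, fQ ω)) - entH p fQ := by
        rw [sub_eq_zero.1 ((condH_eq_zero_iff hp0 _ _).2 hdet)]
    _ ≤ entH p fA := by linarith [entH_pair_le_add hp0 hp1 fA fQ]

/-- Let `A, Q, Z_1, …, Z_n` be finitely valued random variables on a common (finite)
probability space. If `H(Z_i | A, Q) = 0` for every `i` and the tuple `(Z_1, …, Z_n)` is
independent of `Q`, then `H(A) ≥ Σ_{i=1}^n H(Z_i | Z_1, …, Z_{i-1}) = H(Z_1, …, Z_n)`. -/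
theorem entropy_answer_ge_chain_sum
    {Ω : Type} [Fintype Ω] (p : Ω → ℝ) (hp0 : ∀ ω, 0 ≤ p ω) (hp1 : ∑ ω, p ω = 1)
    {n : ℕ} {α : Fin n → Type} [∀ i, Fintype (α i)]
    {A : Type} [Fintype A] {Qv : Type} [Fintype Qv]
    (fA : Ω → A) (fQ : Ω → Qv) (Z : ∀ i : Fin n, Ω → α i)
    (hzero : ∀ i, condH p (Z i) (fun ω => (fA ω, fQ ω)) = 0)
    (hindep : indepPair p (fun ω => (fun i => Z i ω)) fQ) :
    (∑ i, condH p (Z i) (fun ω => (fun j : Fin i.1 => Z (Fin.castLE i.isLt.le j) ω)))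
        ≤ entH p fA ∧
    (∑ i, condH p (Z i) (fun ω => (fun j : Fin i.1 => Z (Fin.castLE i.isLt.le j) ω)))
        = entH p (fun ω => (fun i => Z i ω)) :=
  entropy_answer_ge_chain_sum_general p hp0 hp1 fA fQ Z hzero hindep
end
end

section
/- Let F be a field and 1 ≤ L ≤ D ≤ K integers. For i = 1,…,n, let W_i be a D-element subset of {1,…,K}, let V_i be an L×D MDS matrix over F, and let U_i be the L×K matrix obtained by placing the columns of V_i at the positions indexed by W_i (in increasing order) and zeros in all other columns. Let N_i = |W_i \ (W_1 ∪ … ∪ W_{i-1})| (with N_1 = |W_1| = D). Then the (nL)×K matrix obtained by stacking U_1, …, U_n vertically has rank at least Σ_{i=1}^{n} min{L, N_i}. -/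
/-!
Order the blocks by `i`. The columns in `W_i \ (W_1 ∪ ⋯ ∪ W_{i-1})` vanish in all earlier
blocks, so projecting onto them kills the row space of `U_1, …, U_{i-1}`: each block adds
at least the rank of its restriction to these new columns. That restriction is a set of
`N_i` columns of the MDS matrix `V_i`, and any `min{L, N_i}` of them extend to `L` columns
forming an invertible matrix, hence are linearly independent.
-/

open Matrix

def IsMDS {F : Type} [Field F] {L D : ℕ} (V : Matrix (Fin L) (Fin D) F) : Prop :=
  ∀ g : Fin L → Fin D, Function.Injective g → (V.submatrix id g).det ≠ 0

open Module Submodule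

namespace Submodule

variable {K V : Type*} [Field K] [AddCommGroup V] [Module K V] [FiniteDimensional K V]

theorem finrank_map_add_finrank_le_finrank_sup {W : Type*} [AddCommGroup W]
    [Module K W] {R P : Submodule K V} {π : V →ₗ[K] W} (hP : P ≤ LinearMap.ker π) :
    finrank K (R.map π) + finrank K P ≤ finrank K ↥(R ⊔ P) := by
  set f := π.domRestrict (R ⊔ P)
  have hrange : LinearMap.range f = R.map π := by
    rw [LinearMap.range_domRestrict, map_sup, le_bot_iff.1 (map_le_iff_le_comap.2 hP),
      sup_bot_eq]
  have hker : finrank K P ≤ finrank K (LinearMap.ker f) := by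
    rw [LinearMap.ker_domRestrict, ← (comapSubtypeEquivOfLe le_sup_right).finrank_eq]
    exact finrank_mono (comap_mono hP)
  have := f.finrank_range_add_finrank_ker
  rw [hrange] at this
  omega

theorem sum_finrank_map_le_finrank_iSup {ι : Type*} [Fintype ι] [LinearOrder ι]
    {W : ι → Type*} [∀ i, AddCommGroup (W i)] [∀ i, Module K (W i)]
    (R : ι → Submodule K V) (π : ∀ i, V →ₗ[K] W i)
    (hπ : ∀ i j, j < i → R j ≤ LinearMap.ker (π i)) :
    ∑ i, finrank K ((R i).map (π i)) ≤ finrank K ↥(⨆ i, R i) := by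
  suffices h : ∀ s : Finset ι,
      ∑ i ∈ s, finrank K ((R i).map (π i)) ≤ finrank K ↥(⨆ i ∈ s, R i) by
    rw [show ⨆ i, R i = ⨆ i ∈ Finset.univ, R i by simp]
    exact h Finset.univ
  intro s
  induction s using Finset.induction_on_max with
  | empty => simp
  | insert a s hlt ih =>
    have hP : ⨆ i ∈ s, R i ≤ LinearMap.ker (π a) := iSup₂_le fun j hj => hπ a j (hlt j hj)
    rw [Finset.sum_insert fun ha => (hlt a ha).false, Finset.iSup_insert]
    exact (Nat.add_le_add_left ih _).trans (finrank_map_add_finrank_le_finrank_sup hP)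

end Submodule

theorem Matrix.sum_rank_submatrix_le_rank {F ι m n : Type*} [Field F] [Fintype ι]
    [LinearOrder ι] [Fintype m] [Fintype n] (A : ι → Matrix m n F) (C : ι → Finset n)
    (hA : ∀ i j, j < i → ∀ r, ∀ k ∈ C i, A j r k = 0) :
    ∑ i, ((A i).submatrix id ((↑) : C i → n)).rank ≤
      (of fun q : ι × m => A q.1 q.2).rank := by
  have hrows : Set.range (of fun q : ι × m => A q.1 q.2).row = ⋃ i, Set.range (A i).row := by
    ext v
    simp only [Set.mem_iUnion, Set.mem_range, Prod.exists]
    rfl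
  have hblock : ∀ i, ((A i).submatrix id ((↑) : C i → n)).rank =
      finrank F ((span F (Set.range (A i).row)).map
        (LinearMap.funLeft F F ((↑) : C i → n))) := by
    intro i
    rw [rank_eq_finrank_span_row, map_span, ← Set.range_comp]
    rfl
  simp_rw [hblock]
  rw [rank_eq_finrank_span_row, hrows, span_iUnion]
  refine sum_finrank_map_le_finrank_iSup _ _ fun i j hji => span_le.2 ?_
  rintro _ ⟨r, rfl⟩
  ext ⟨k, hk⟩
  exact hA i j hji r k hk

theorem IsMDS.linearIndepOn_col {F : Type} [Field F] {L D : ℕ} {V : Matrix (Fin L) (Fin D) F}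
    (hV : IsMDS V) {G : Finset (Fin D)} (hG : G.card = L) : LinearIndepOn F V.col ↑G := by
  set g := G.orderEmbOfFin hG
  have hunit : IsUnit (V.submatrix id g) :=
    (isUnit_iff_isUnit_det _).2 (hV g g.injective).isUnit
  rw [← G.range_orderEmbOfFin hG, linearIndepOn_range_iff g.injective]
  exact linearIndependent_cols_of_isUnit hunit

theorem IsMDS.min_le_rank_submatrix {F : Type} [Field F] {L D : ℕ} {V : Matrix (Fin L) (Fin D) F}
    (hV : IsMDS V) (hLD : L ≤ D) {ι : Type*} [Fintype ι] {τ : ι → Fin D}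
    (hτ : Function.Injective τ) : min L (Fintype.card ι) ≤ (V.submatrix id τ).rank := by
  obtain ⟨s, hsτ, hs⟩ := Finset.exists_subset_card_eq (s := Finset.univ.image τ)
    (n := min L (Fintype.card ι))
    (by rw [Finset.card_image_of_injective _ hτ, Finset.card_univ]; exact min_le_right _ _)
  obtain ⟨G, hsG, -, hG⟩ := Finset.exists_subsuperset_card_eq (Finset.subset_univ s)
    (hs ▸ min_le_left _ _) (by simpa using hLD)
  have hli : LinearIndependent F (fun d : s => V.col d) := (hV.linearIndepOn_col hG).mono hsG
  rw [rank_eq_finrank_span_cols, ← hs, ← Fintype.card_coe s, ← finrank_span_eq_card hli]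
  refine finrank_mono (span_mono ?_)
  rintro _ ⟨⟨d, hd⟩, rfl⟩
  obtain ⟨j, -, rfl⟩ := Finset.mem_image.1 (hsτ hd)
  exact ⟨j, rfl⟩

theorem rank_stacked_padded_mds_ge_general (F : Type) [Field F] (K D L n : ℕ)
    (hLD : L ≤ D)
    (W : Fin n → Finset (Fin K)) (hW : ∀ i, (W i).card = D)
    (V : ∀ i : Fin n, Matrix (Fin L) (Fin D) F) (hV : ∀ i, IsMDS (V i))
    (U : ∀ i : Fin n, Matrix (Fin L) (Fin K) F)
    (hU : ∀ i l k, U i l k =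
      if hk : k ∈ W i then V i l (((W i).orderIsoOfFin (hW i)).symm ⟨k, hk⟩) else 0) :
    ∑ i, min L ((W i \ (Finset.univ.filter (fun j => j < i)).biUnion W).card)
      ≤ (Matrix.of (fun q : Fin n × Fin L => fun k : Fin K => U q.1 q.2 k)).rank := by
  set S : Fin n → Finset (Fin K) := fun i => (Finset.univ.filter (fun j => j < i)).biUnion W
  refine (Finset.sum_le_sum fun i _ => ?_).trans
    (Matrix.sum_rank_submatrix_le_rank U (fun i => W i \ S i) ?_)
  · have hmem (k : ↥(W i \ S i)) : ↑k ∈ W i := (Finset.mem_sdiff.1 k.2).1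
    have hblock : (U i).submatrix id ((↑) : ↥(W i \ S i) → Fin K) =
        (V i).submatrix id fun k : ↥(W i \ S i) =>
          ((W i).orderIsoOfFin (hW i)).symm ⟨k, hmem k⟩ := by
      ext l k
      simp only [submatrix_apply, id, hU, dif_pos (hmem k)]
    rw [hblock, ← Fintype.card_coe (W i \ S i)]
    refine (hV i).min_le_rank_submatrix hLD fun a b hab => ?_
    exact Subtype.ext (Subtype.mk.inj (((W i).orderIsoOfFin (hW i)).symm.injective hab))
  · intro i j hji l k hk
    rw [hU, dif_neg]
    exact fun hkj =>
      (Finset.mem_sdiff.1 hk).2 (Finset.mem_biUnion.2 ⟨j, by simpa using hji, hkj⟩)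

/-- For `i = 1, …, n`, let `W_i` be a `D`-element subset of `{1, …, K}`, `V_i` an
`L × D` MDS matrix and `U_i` the `L × K` matrix obtained by placing the columns of
`V_i` at the positions indexed by `W_i` (in increasing order), with zeros elsewhere.
With `N_i = |W_i \ (W_1 ∪ ⋯ ∪ W_{i-1})|`, the `(nL) × K` matrix obtained by stacking
`U_1, …, U_n` has rank at least `Σ_i min{L, N_i}`. -/
theorem rank_stacked_padded_mds_ge (F : Type) [Field F] (K D L n : ℕ)
    (hL : 1 ≤ L) (hLD : L ≤ D) (hDK : D ≤ K)
    (W : Fin n → Finset (Fin K)) (hW : ∀ i, (W i).card = D)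
    (V : ∀ i : Fin n, Matrix (Fin L) (Fin D) F) (hV : ∀ i, IsMDS (V i))
    (U : ∀ i : Fin n, Matrix (Fin L) (Fin K) F)
    (hU : ∀ i l k, U i l k =
      if hk : k ∈ W i then V i l (((W i).orderIsoOfFin (hW i)).symm ⟨k, hk⟩) else 0) :
    ∑ i, min L ((W i \ (Finset.univ.filter (fun j => j < i)).biUnion W).card)
      ≤ (Matrix.of (fun q : Fin n × Fin L => fun k : Fin K => U q.1 q.2 k)).rank :=
  rank_stacked_padded_mds_ge_general F K D L n hLD W hW V hV U hU
end

section
/- Let 1 ≤ L ≤ D ≤ K be integers and R = K mod D. Let n ≥ 1 and N_1, …, N_n be integers with N_1 = D, 1 ≤ N_i ≤ D for all i, and Σ_{i=1}^{n} N_i = K. Then Σ_{i=1}^{n} min{L, N_i} ≥ L·⌊K/D⌋ + min{L, R}. -/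
/-!
Split `K` greedily into `⌊K/D⌋` blocks of size `D` and one block of size `R`: the bound
`L⌊K/D⌋ + min{L, R}` is `Σ min L` over that partition. Adding a part `a ≤ D` to a total `m` raises this greedy
value by at most `min L a`, since the new remainder `a + m % D` either stays below `D` or
overflows into exactly one new full block; induction over the parts gives the bound.
-/

namespace Nat

theorem mul_div_add_min_mod_add_le {D L : ℕ} (hLD : L ≤ D) {a : ℕ} (ha : a ≤ D) (m : ℕ) :
    L * ((a + m) / D) + min L ((a + m) % D) ≤ min L a + (L * (m / D) + min L (m % D)) := by
  rcases Nat.eq_zero_or_pos D with rfl | hD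
  · obtain rfl : L = 0 := Nat.le_zero.mp hLD
    simp
  have hr : m % D < D := Nat.mod_lt m hD
  have hsplit : a + m = (a + m % D) + D * (m / D) := by
    have := Nat.mod_add_div m D
    omega
  rw [hsplit, Nat.add_mul_div_left _ _ hD, Nat.add_mul_mod_self_left, Nat.mul_add]
  rcases lt_or_ge (a + m % D) D with hlt | hge
  · rw [Nat.div_eq_of_lt hlt, Nat.mod_eq_of_lt hlt]
    omega
  · have hover : a + m % D = (a + m % D - D) + D := by omega
    have hlt : a + m % D - D < D := by omega
    rw [hover, Nat.add_div_right _ hD, Nat.add_mod_right, Nat.div_eq_of_lt hlt,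
      Nat.mod_eq_of_lt hlt]
    omega

end Nat

theorem Finset.mul_sum_div_add_min_sum_mod_le_sum_min {ι : Type*} {D L : ℕ} (hLD : L ≤ D)
    (s : Finset ι) (N : ι → ℕ) (hN : ∀ i ∈ s, N i ≤ D) :
    L * ((∑ i ∈ s, N i) / D) + min L ((∑ i ∈ s, N i) % D) ≤ ∑ i ∈ s, min L (N i) := by
  induction s using Finset.cons_induction with
  | empty => simp
  | cons a s has ih =>
    rw [Finset.sum_cons, Finset.sum_cons]
    calc _ ≤ min L (N a) + (L * ((∑ i ∈ s, N i) / D) + min L ((∑ i ∈ s, N i) % D)) :=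
          Nat.mul_div_add_min_mod_add_le hLD (hN a (Finset.mem_cons_self a s)) _
      _ ≤ min L (N a) + ∑ i ∈ s, min L (N i) := by
          gcongr
          exact ih fun i hi => hN i (Finset.mem_cons_of_mem hi)

theorem sum_min_ge_of_partition_general (K D L : ℕ) (hLD : L ≤ D)
    (n : ℕ) (N : Fin n → ℕ)
    (hNub : ∀ i, N i ≤ D)
    (hsum : ∑ i, N i = K) :
    L * (K / D) + min L (K % D) ≤ ∑ i, min L (N i) := by
  subst hsum
  exact Finset.univ.mul_sum_div_add_min_sum_mod_le_sum_min hLD N fun i _ => hNub i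

/-- Let `1 ≤ L ≤ D ≤ K`, `R = K % D`, `n ≥ 1` and `N_1, …, N_n` integers with
`N_1 = D`, `1 ≤ N_i ≤ D` for all `i`, and `Σ_i N_i = K`. Then
`Σ_i min{L, N_i} ≥ L·⌊K/D⌋ + min{L, R}`. -/
theorem sum_min_ge_of_partition (K D L : ℕ) (hL : 1 ≤ L) (hLD : L ≤ D) (hDK : D ≤ K)
    (n : ℕ) (hn : 1 ≤ n) (N : Fin n → ℕ)
    (hN1 : N ⟨0, hn⟩ = D)
    (hNlb : ∀ i, 1 ≤ N i) (hNub : ∀ i, N i ≤ D)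
    (hsum : ∑ i, N i = K) :
    L * (K / D) + min L (K % D) ≤ ∑ i, min L (N i) :=
  sum_min_ge_of_partition_general K D L hLD n N hNub hsum
end

section
/- Let 1 ≤ L ≤ D ≤ K be integers and R = K mod D. Consider the integer linear program: minimize Σ_{j=1}^{L} j·T_j + Σ_{j=L+1}^{D} L·T_j over nonnegative integers T_1, …, T_D subject to Σ_{j=1}^{D} j·T_j = K and T_D ≥ 1. This program is feasible, and its minimum value equals L·⌊K/D⌋ + min{L, R}; in particular, the assignment T_D = ⌊K/D⌋, T_R = 1 when R > 0 (all other T_j = 0) is an optimal solution. -/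
/-!
Reading a solution `T` as a partition of `K` into `T j` parts of size `j ≤ D`, the objective
charges `min L j` for a part of size `j`. The cost `L * (x / D) + min L (x % D)` of the greedy
partition of `x` is subadditive in `x` when `L ≤ D` and equals `min L j` for `j ≤ D`, so it
bounds the cost of every partition of `K` from below, and the greedy partition of `K` attains it.
-/

open Finset

def minPartitionCost (D L x : ℕ) : ℕ := L * (x / D) + min L (x % D)

namespace minPartitionCost

variable {D L : ℕ}

theorem add_le (hLD : L ≤ D) (a b : ℕ) :
    minPartitionCost D L (a + b) ≤ minPartitionCost D L a + minPartitionCost D L b := by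
  obtain rfl | hD := D.eq_zero_or_pos
  · simp [minPartitionCost, Nat.le_zero.1 hLD]
  have hmod := Nat.add_mod_add_ite a b D
  have := Nat.mod_lt a hD
  have := Nat.mod_lt b hD
  unfold minPartitionCost
  rw [Nat.add_div hD]
  split_ifs at hmod ⊢ <;> simp only [Nat.mul_add] <;> omega

theorem mul_le (hLD : L ≤ D) (n x : ℕ) :
    minPartitionCost D L (n * x) ≤ n * minPartitionCost D L x := by
  simpa using le_sum_of_subadditive (minPartitionCost D L) (by simp [minPartitionCost])
    (add_le hLD) (range n) fun _ => x

theorem eq_min_of_le (hLD : L ≤ D) {j : ℕ} (hj : j ≤ D) : minPartitionCost D L j = min L j := by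
  obtain rfl | hj := hj.eq_or_lt
  · obtain rfl | hD := j.eq_zero_or_pos
    · simp [minPartitionCost]
    · simp [minPartitionCost, Nat.div_self hD, hLD]
  · simp [minPartitionCost, Nat.div_eq_of_lt hj, Nat.mod_eq_of_lt hj]

theorem le_sum (hLD : L ≤ D) {s : Finset ℕ} (hs : ∀ j ∈ s, j ≤ D) (T : ℕ → ℕ) :
    minPartitionCost D L (∑ j ∈ s, j * T j) ≤ ∑ j ∈ s, min L j * T j :=
  calc minPartitionCost D L (∑ j ∈ s, j * T j)
      ≤ ∑ j ∈ s, minPartitionCost D L (T j * j) := by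
        simp_rw [mul_comm _ (T _)]
        exact le_sum_of_subadditive _ (by simp [minPartitionCost]) (add_le hLD) _ _
    _ ≤ ∑ j ∈ s, min L j * T j := sum_le_sum fun j hj => by
        rw [mul_comm (min L j), ← eq_min_of_le hLD (hs j hj)]
        exact mul_le hLD _ _

end minPartitionCost

theorem sum_Icc_mul_add_sum_Icc_eq_sum_min_mul {L D : ℕ} (hLD : L ≤ D) (T : ℕ → ℕ) :
    ∑ j ∈ Icc 1 L, j * T j + ∑ j ∈ Icc (L + 1) D, L * T j
      = ∑ j ∈ Icc 1 D, min L j * T j := by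
  rw [Icc_add_one_left_eq_Ioc, show Icc 1 = Ioc 0 from funext (Icc_add_one_left_eq_Ioc 0),
    ← sum_Ioc_consecutive _ L.zero_le hLD]
  congr 1
  · exact sum_congr rfl fun j hj => by rw [min_eq_right (mem_Ioc.1 hj).2]
  · exact sum_congr rfl fun j hj => by rw [min_eq_left (mem_Ioc.1 hj).1.le]

theorem sum_Icc_mul_ite_add_ite (g : ℕ → ℕ) (hg : g 0 = 0) (q : ℕ) {D r : ℕ} (hr : r < D) :
    ∑ j ∈ Icc 1 D, g j * ((if j = D then q else 0) + (if j = r then 1 else 0)) =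
      g D * q + g r := by
  have hD : D ∈ Icc 1 D := mem_Icc.2 ⟨by omega, le_rfl⟩
  simp only [mul_add, mul_ite, mul_one, mul_zero, sum_add_distrib, sum_ite_eq', if_pos hD]
  split_ifs with h
  · rfl
  · obtain rfl : r = 0 := by simp at h; omega
    simp [hg]

/-- The integer linear program: minimize `Σ_{j=1}^L j·T_j + Σ_{j=L+1}^D L·T_j` over
nonnegative integers `T_1, …, T_D` subject to `Σ_{j=1}^D j·T_j = K` and `T_D ≥ 1`,
where `1 ≤ L ≤ D ≤ K`, is feasible and its minimum value equals
`L·⌊K/D⌋ + min{L, R}` with `R = K % D`; in particular the assignment `T_D = ⌊K/D⌋`,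
`T_R = 1` when `R > 0` (all other `T_j = 0`) is an optimal solution. -/
theorem ilp_min_value (K D L : ℕ) (hL : 1 ≤ L) (hLD : L ≤ D) (hDK : D ≤ K) :
    IsLeast {v : ℕ | ∃ T : ℕ → ℕ,
        (∑ j ∈ Finset.Icc 1 D, j * T j = K) ∧ 1 ≤ T D ∧
        v = ∑ j ∈ Finset.Icc 1 L, j * T j + ∑ j ∈ Finset.Icc (L + 1) D, L * T j}
      (L * (K / D) + min L (K % D)) ∧
    ((∑ j ∈ Finset.Icc 1 D, j *
        ((if j = D then K / D else 0) + (if j = K % D then 1 else 0)) = K) ∧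
      1 ≤ (if D = D then K / D else 0) + (if D = K % D then 1 else 0) ∧
      (∑ j ∈ Finset.Icc 1 L, j *
          ((if j = D then K / D else 0) + (if j = K % D then 1 else 0)) +
        ∑ j ∈ Finset.Icc (L + 1) D, L *
          ((if j = D then K / D else 0) + (if j = K % D then 1 else 0)))
        = L * (K / D) + min L (K % D)) := by
  have hD : 0 < D := by omega
  have hR : K % D < D := Nat.mod_lt K hD
  have hfeas := (sum_Icc_mul_ite_add_ite id rfl (K / D) hR).trans (Nat.div_add_mod K D)
  have hTD : 1 ≤ (if D = D then K / D else 0) + (if D = K % D then 1 else 0) := by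
    simpa [hR.ne'] using (Nat.one_le_div_iff hD).2 hDK
  have hval := (sum_Icc_mul_add_sum_Icc_eq_sum_min_mul hLD _).trans
    (sum_Icc_mul_ite_add_ite (min L) (by simp) (K / D) hR)
  rw [min_eq_left hLD] at hval
  refine ⟨⟨⟨_, hfeas, hTD, hval.symm⟩, ?_⟩, hfeas, hTD, hval⟩
  rintro _ ⟨T, hT, -, rfl⟩
  rw [sum_Icc_mul_add_sum_Icc_eq_sum_min_mul hLD, ← hT]
  exact minPartitionCost.le_sum hLD (fun j hj => (mem_Icc.1 hj).2) T
end

section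
/- Let F be a field, s ≥ 1, and let x_1, …, x_s ∈ F be pairwise distinct and y_1, …, y_{s-1} ∈ F be pairwise distinct, with x_i ≠ y_j for all i, j. Let M be the (s-1)×s matrix with entries M_{j,i} = (x_i − y_j)^{-1}. Then the kernel of M (the space of column vectors c ∈ F^s with M·c = 0) is one-dimensional, and every nonzero vector c in the kernel has all s of its coordinates nonzero. -/
/-!
A kernel vector of the `(s-1) × s` matrix with a zero coordinate is a kernel vector of a square
Cauchy matrix, hence zero: with `w i` the barycentric weights of the nodes `x i`, the Lagrange
interpolant of the values `c i / w i` has degree `< s - 1` and its value at `a` off the nodes is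
`-(∏ (a - x i)) * ∑ c i / (x i - a)`, which vanishes at the `s - 1` points `y j`. So a single
coordinate is injective on the kernel, which is therefore at most one-dimensional; rank–nullity
gives the other inequality.
-/

open Matrix Polynomial Finset

theorem eq_zero_of_sum_inv_sub_mul_eq_zero {F ι : Type*} [Field F] [DecidableEq ι]
    {s : Finset ι} {x : ι → F} (hx : Set.InjOn x s) {t : Finset F} (hst : #s ≤ #t)
    (hxt : ∀ i ∈ s, x i ∉ t) {c : ι → F} (hc : ∀ a ∈ t, ∑ i ∈ s, (x i - a)⁻¹ * c i = 0) :
    ∀ i ∈ s, c i = 0 := by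
  set r : ι → F := fun i => c i / Lagrange.nodalWeight s x i
  have hr : ∀ i ∈ s, c i = Lagrange.nodalWeight s x i * r i := fun i hi =>
    (mul_div_cancel₀ _ (Lagrange.nodalWeight_ne_zero hx hi)).symm
  have heval : ∀ a ∈ t, (Lagrange.interpolate s x r).eval a = 0 := by
    intro a ha
    have hax : ∀ i ∈ s, a ≠ x i := fun i hi h => hxt i hi (h ▸ ha)
    rw [Lagrange.eval_interpolate_not_at_node r hax]
    have hsum : ∑ i ∈ s, Lagrange.nodalWeight s x i * (a - x i)⁻¹ * r i =
        -∑ i ∈ s, (x i - a)⁻¹ * c i := by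
      rw [← sum_neg_distrib]
      refine sum_congr rfl fun i hi => ?_
      rw [hr i hi, ← neg_sub, inv_neg]
      ring
    rw [hsum, hc a ha, neg_zero, mul_zero]
  have hzero : Lagrange.interpolate s x r = 0 :=
    eq_zero_of_degree_lt_of_eval_finset_eq_zero t
      ((Lagrange.degree_interpolate_lt r hx).trans_le (by exact_mod_cast hst)) heval
  intro i hi
  rw [hr i hi, ← Lagrange.eval_interpolate_at_node r hx hi, hzero, eval_zero, mul_zero]

theorem eq_zero_of_sum_inv_sub_mul_eq_zero_of_apply_eq_zero {F ι κ : Type*} [Field F]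
    [Fintype ι] [Fintype κ] {x : ι → F} {y : κ → F}
    (hx : Function.Injective x) (hy : Function.Injective y) (hxy : ∀ i j, x i ≠ y j)
    (hcard : Fintype.card ι ≤ Fintype.card κ + 1) {c : ι → F}
    (hc : ∀ j, ∑ i, (x i - y j)⁻¹ * c i = 0) {i₀ : ι} (hi₀ : c i₀ = 0) : c = 0 := by
  classical
  have hcard' : #(univ.erase i₀) ≤ #(univ.image y) := by
    rw [card_erase_of_mem (mem_univ _), card_image_of_injective _ hy, card_univ, card_univ]
    omega
  have hxt : ∀ i ∈ univ.erase i₀, x i ∉ univ.image y := fun i _ hi => by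
    obtain ⟨j, -, hj⟩ := mem_image.mp hi
    exact hxy i j hj.symm
  have hct : ∀ a ∈ univ.image y, ∑ i ∈ univ.erase i₀, (x i - a)⁻¹ * c i = 0 := by
    simp only [mem_image, mem_univ, true_and, forall_exists_index, forall_apply_eq_imp_iff]
    intro j
    rw [sum_erase _ (by rw [hi₀, mul_zero]), hc j]
  have hvanish := eq_zero_of_sum_inv_sub_mul_eq_zero hx.injOn hcard' hxt hct
  funext i
  by_cases hi : i = i₀
  · exact hi ▸ hi₀
  · exact hvanish i (mem_erase.mpr ⟨hi, mem_univ _⟩)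

theorem Submodule.finrank_le_one_of_apply_eq_zero_imp {K ι : Type*} [Field K]
    {V : Submodule K (ι → K)} (i : ι) (h : ∀ v ∈ V, v i = 0 → v = 0) :
    Module.finrank K V ≤ 1 := by
  have hinj : Function.Injective ((LinearMap.proj i : (ι → K) →ₗ[K] K) ∘ₗ V.subtype) := by
    rw [← LinearMap.ker_eq_bot, Submodule.eq_bot_iff]
    intro v hv
    exact Subtype.ext (h v v.2 hv)
  simpa using LinearMap.finrank_le_finrank_of_injective hinj

theorem Matrix.card_sub_card_le_finrank_ker_mulVecLin {K m n : Type*} [Field K] [Fintype m]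
    [Fintype n] (A : Matrix m n K) :
    Fintype.card n - Fintype.card m ≤ Module.finrank K (LinearMap.ker A.mulVecLin) := by
  have hrank := LinearMap.finrank_range_add_finrank_ker A.mulVecLin
  have hrange := Submodule.finrank_le (LinearMap.range A.mulVecLin)
  simp only [Module.finrank_fintype_fun_eq_card] at hrank hrange
  omega

/-- Let `x_1, …, x_s` be pairwise distinct and `y_1, …, y_{s-1}` be pairwise distinct
elements of a field `F` with `x_i ≠ y_j` for all `i, j`, and let `M` be the
`(s-1) × s` Cauchy-type matrix with entries `M_{j,i} = (x_i − y_j)⁻¹`. Then the kernel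
of `M` is one-dimensional and every nonzero vector in the kernel has all of its `s`
coordinates nonzero. -/
theorem cauchy_kernel_one_dim_all_coords_nonzero (F : Type) [Field F] (s : ℕ)
    (hs : 1 ≤ s) (x : Fin s → F) (y : Fin (s - 1) → F)
    (hx : Function.Injective x) (hy : Function.Injective y)
    (hxy : ∀ i j, x i ≠ y j)
    (M : Matrix (Fin (s - 1)) (Fin s) F)
    (hM : ∀ j i, M j i = (x i - y j)⁻¹) :
    Module.finrank F (LinearMap.ker M.mulVecLin) = 1 ∧
    ∀ c : Fin s → F, M.mulVec c = 0 → c ≠ 0 → ∀ i, c i ≠ 0 := by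
  have hker : ∀ c, M *ᵥ c = 0 → ∀ i, c i = 0 → c = 0 := fun c hc i hi =>
    eq_zero_of_sum_inv_sub_mul_eq_zero_of_apply_eq_zero hx hy hxy (by simp; omega) (fun j => by
      simpa [mulVec, dotProduct, hM] using congrFun hc j) hi
  refine ⟨le_antisymm ?_ ?_, fun c hc hc0 i hi => hc0 (hker c hc i hi)⟩
  · exact Submodule.finrank_le_one_of_apply_eq_zero_imp ⟨0, hs⟩ fun c hc => hker c hc _
  · have := M.card_sub_card_le_finrank_ker_mulVecLin
    simp only [Fintype.card_fin] at this
    omega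
end

section
/- Let F be a field, s ≥ 1, and let x_1, …, x_s ∈ F be pairwise distinct and y_1, …, y_{s-1} ∈ F be pairwise distinct, with x_i ≠ y_j for all i, j. Let M be the (s-1)×s matrix with entries M_{j,i} = (x_i − y_j)^{-1}. Let y_* ∈ F be an element distinct from y_1, …, y_{s-1} and from x_1, …, x_s. Then for every nonzero c ∈ F^s with M·c = 0, one has Σ_{i=1}^{s} c_i·(x_i − y_*)^{-1} ≠ 0. -/
/-!
With the nodal weights `w i = ∏_{k ≠ i} (x i - x k)⁻¹`, the Lagrange interpolant of the values
`c i / w i` at the nodes `x i` is `f = ∑ i, c i ∏_{k ≠ i} (X - x k)`, a polynomial of degree `< s`.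
By the barycentric formula, at a point `z` outside the nodes `f z` is `-∏_k (z - x k)` times
`∑ i, c i (x i - z)⁻¹`. So if `M c = 0` and the extra row also vanished on `c`, then `f` would
have the `s` distinct roots `y₁, …, y_{s-1}, y⋆`, hence `f = 0`, and then every `c i / w i = f (x i)`
would vanish.
-/

open Matrix Polynomial Finset Lagrange

section CauchyKernel

variable {F ι : Type*} [Field F] [Fintype ι] [DecidableEq ι] {x : ι → F}

theorem eval_interpolate_div_nodalWeight (hx : Function.Injective x) (c : ι → F) {z : F}
    (hz : ∀ i, z ≠ x i) :
    eval z (interpolate univ x fun i => c i / nodalWeight univ x i) =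
      -(eval z (nodal univ x) * ∑ i, c i * (x i - z)⁻¹) := by
  rw [eval_interpolate_not_at_node _ fun i _ => hz i, ← mul_neg, ← sum_neg_distrib]
  congr 1
  refine sum_congr rfl fun i _ => ?_
  have hw : nodalWeight univ x i ≠ 0 := nodalWeight_ne_zero hx.injOn (mem_univ i)
  rw [← neg_sub, inv_neg]
  field_simp

/-- The Cauchy matrix `((x i - t j)⁻¹)` with at least as many rows as columns has trivial kernel. -/
theorem eq_zero_of_forall_sum_mul_inv_sub_eq_zero {κ : Type*} [Fintype κ]
    (hx : Function.Injective x) {t : κ → F} (ht : Function.Injective t)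
    (hcard : Fintype.card ι ≤ Fintype.card κ) (hxt : ∀ i j, x i ≠ t j) {c : ι → F}
    (hc : ∀ j, ∑ i, c i * (x i - t j)⁻¹ = 0) : c = 0 := by
  set f := interpolate univ x fun i => c i / nodalWeight univ x i
  have hdeg : f.degree < #(univ : Finset κ) :=
    (degree_interpolate_lt _ hx.injOn).trans_le (by simpa using hcard)
  have hf : f = 0 := eq_zero_of_degree_lt_of_eval_index_eq_zero _ ht.injOn hdeg fun j _ => by
    rw [eval_interpolate_div_nodalWeight hx c fun i => (hxt i j).symm, hc, mul_zero, neg_zero]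
  funext i
  have hval : eval (x i) f = c i / nodalWeight univ x i :=
    eval_interpolate_at_node _ hx.injOn (mem_univ i)
  rw [hf, eval_zero, eq_comm, div_eq_zero_iff] at hval
  exact hval.resolve_right (nodalWeight_ne_zero hx.injOn (mem_univ i))

end CauchyKernel

theorem cauchy_kernel_extra_row_ne_zero_general (F : Type) [Field F] (s : ℕ)
    (x : Fin s → F) (y : Fin (s - 1) → F)
    (hx : Function.Injective x) (hy : Function.Injective y)
    (hxy : ∀ i j, x i ≠ y j)
    (M : Matrix (Fin (s - 1)) (Fin s) F)
    (hM : ∀ j i, M j i = (x i - y j)⁻¹)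
    (ystar : F) (hy1 : ∀ j, ystar ≠ y j) (hy2 : ∀ i, ystar ≠ x i)
    (c : Fin s → F) (hc : c ≠ 0) (hker : M.mulVec c = 0) :
    ∑ i, c i * (x i - ystar)⁻¹ ≠ 0 := by
  intro hsum
  have hrows : ∀ j, ∑ i, c i * (x i - y j)⁻¹ = 0 := fun j => by
    simpa [mulVec, dotProduct, hM, mul_comm] using congrFun hker j
  refine hc (eq_zero_of_forall_sum_mul_inv_sub_eq_zero hx (t := Fin.cons ystar y)
    (Fin.cons_injective_iff.2 ⟨fun ⟨j, hj⟩ => hy1 j hj.symm, hy⟩)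
    (by rw [Fintype.card_fin, Fintype.card_fin]; omega) ?_ ?_)
  · intro i j
    cases j using Fin.cases with
    | zero => exact (hy2 i).symm
    | succ j => exact hxy i j
  · intro j
    cases j using Fin.cases with
    | zero => exact hsum
    | succ j => exact hrows j

/-- Let `x_1, …, x_s` be pairwise distinct and `y_1, …, y_{s-1}` be pairwise distinct
elements of a field `F` with `x_i ≠ y_j` for all `i, j`, let `M` be the `(s-1) × s`
Cauchy-type matrix with entries `M_{j,i} = (x_i − y_j)⁻¹`, and let `y⋆` be distinct
from all the `y_j` and all the `x_i`. Then for every nonzero `c` in the kernel of `M`,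
`Σ_i c_i·(x_i − y⋆)⁻¹ ≠ 0`. -/
theorem cauchy_kernel_extra_row_ne_zero (F : Type) [Field F] (s : ℕ)
    (hs : 1 ≤ s) (x : Fin s → F) (y : Fin (s - 1) → F)
    (hx : Function.Injective x) (hy : Function.Injective y)
    (hxy : ∀ i j, x i ≠ y j)
    (M : Matrix (Fin (s - 1)) (Fin s) F)
    (hM : ∀ j i, M j i = (x i - y j)⁻¹)
    (ystar : F) (hy1 : ∀ j, ystar ≠ y j) (hy2 : ∀ i, ystar ≠ x i)
    (c : Fin s → F) (hc : c ≠ 0) (hker : M.mulVec c = 0) :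
    ∑ i, c i * (x i - ystar)⁻¹ ≠ 0 :=
  cauchy_kernel_extra_row_ne_zero_general F s x y hx hy hxy M hM ystar hy1 hy2 c hc hker
end

section
/- Let F be a field and 1 ≤ k ≤ n integers. If F contains at least n elements, then there exists a k×n matrix over F such that every k×k submatrix formed by k of its columns is invertible (i.e., a k×n MDS matrix over F exists). -/
open Matrix

def powerMatrix {R ι : Type*} [CommRing R] (k : ℕ) (a : ι → R) : Matrix (Fin k) ι R :=
  of fun i j => a j ^ (i : ℕ)

theorem powerMatrix_submatrix_eq_transpose_vandermonde {R ι : Type*} [CommRing R] {k : ℕ}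
    (a : ι → R) (g : Fin k → ι) :
    (powerMatrix k a).submatrix id g = (vandermonde (a ∘ g))ᵀ := by
  ext i j
  simp [powerMatrix, vandermonde]

theorem det_powerMatrix_submatrix_ne_zero {R ι : Type*} [CommRing R] [IsDomain R] {k : ℕ}
    {a : ι → R} (ha : Function.Injective a) {g : Fin k → ι} (hg : Function.Injective g) :
    ((powerMatrix k a).submatrix id g).det ≠ 0 := by
  rw [powerMatrix_submatrix_eq_transpose_vandermonde, det_transpose]
  exact det_vandermonde_ne_zero_iff.mpr (ha.comp hg)

theorem exists_mds_matrix_general (F : Type) [Field F] (k n : ℕ)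
    (hcard : ∃ f : Fin n → F, Function.Injective f) :
    ∃ M : Matrix (Fin k) (Fin n) F,
      ∀ g : Fin k → Fin n, Function.Injective g → (M.submatrix id g).det ≠ 0 := by
  obtain ⟨a, ha⟩ := hcard
  exact ⟨powerMatrix k a, fun g hg => det_powerMatrix_submatrix_ne_zero ha hg⟩

/-- If a field `F` contains at least `n` elements and `1 ≤ k ≤ n`, then there exists a
`k × n` MDS matrix over `F`, i.e. a `k × n` matrix such that every `k × k` submatrix
formed by `k` of its columns is invertible. -/
theorem exists_mds_matrix (F : Type) [Field F] (k n : ℕ) (hk : 1 ≤ k) (hkn : k ≤ n)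
    (hcard : ∃ f : Fin n → F, Function.Injective f) :
    ∃ M : Matrix (Fin k) (Fin n) F,
      ∀ g : Fin k → Fin n, Function.Injective g → (M.submatrix id g).det ≠ 0 :=
  exists_mds_matrix_general F k n hcard
end

section
/- Let F be a field, t ≥ 1 and m ≥ 1 integers, and let x_1, …, x_m, y_1, …, y_t be t+m pairwise distinct elements of F. Let {k_1, …, k_r} ⊆ {1,…,t} and {l_1, …, l_s} ⊆ {1,…,m} be subsets (r ≥ 0, s ≥ 1) with r + s = t + 1. Then there exist nonzero scalars c_1, …, c_s ∈ F such that Σ_{i=1}^{s} c_i·(x_{l_i} − y_k)^{-1} = 0 for every k ∈ {1,…,t} \ {k_1,…,k_r}, and Σ_{i=1}^{s} c_i·(x_{l_i} − y_{k_j})^{-1} ≠ 0 for every j ∈ {1,…,r}. -/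
/-!
Put `v_i = x_{l_i}` and let `f = ∏_{k ∉ {k_1, …, k_r}} (X - y_k)`, a polynomial of degree
`t - r = s - 1 < s`. Lagrange interpolation of `f` at the `s` nodes `v_i` gives the partial
fraction expansion `f(z) / ∏_i (z - v_i) = ∑_i w_i f(v_i) / (z - v_i)` with the barycentric
weights `w_i`. Taking `c_i = w_i f(v_i)`, the sum `∑_i c_i (v_i - z)⁻¹` is, up to sign, this
rational function, which vanishes exactly at the roots `y_k` of `f` among the points `y_j`.
-/

open Polynomial Finset

namespace Lagrange

variable {ι F : Type*} [DecidableEq ι] [Field F] {s : Finset ι} {v : ι → F}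

theorem sum_nodalWeight_mul_eval_mul_inv_sub (hvs : Set.InjOn v s) {f : F[X]}
    (hf : f.degree < #s) {z : F} (hz : ∀ i ∈ s, z ≠ v i) :
    ∑ i ∈ s, nodalWeight s v i * f.eval (v i) * (v i - z)⁻¹ =
      -(f.eval z / (nodal s v).eval z) := by
  have h := eval_interpolate_not_at_node (fun i => f.eval (v i)) hz
  rw [← eq_interpolate hvs hf] at h
  rw [h, mul_div_cancel_left₀ _ (eval_nodal_not_at_node hz), ← sum_neg_distrib]
  refine sum_congr rfl fun i _ => ?_
  rw [← neg_sub z, inv_neg]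
  ring

end Lagrange

open Lagrange in
theorem exists_alignment_coefficients_general (F : Type) [Field F] (t m : ℕ)
    (x : Fin m → F) (y : Fin t → F)
    (hx : Function.Injective x) (hy : Function.Injective y)
    (hxy : ∀ i j, x i ≠ y j)
    (r s : ℕ) (hs : 1 ≤ s) (hrs : r + s = t + 1)
    (k : Fin r → Fin t) (hk : Function.Injective k)
    (l : Fin s → Fin m) (hl : Function.Injective l) :
    ∃ c : Fin s → F, (∀ i, c i ≠ 0) ∧
      (∀ kk : Fin t, kk ∉ Set.range k → ∑ i, c i * (x (l i) - y kk)⁻¹ = 0) ∧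
      (∀ j : Fin r, ∑ i, c i * (x (l i) - y (k j))⁻¹ ≠ 0) := by
  classical
  set K := (univ.image k)ᶜ
  have hnodes : Set.InjOn (x ∘ l) (univ : Finset (Fin s)) := (hx.comp hl).injOn
  have hdeg : (nodal K y).degree < #(univ : Finset (Fin s)) := by
    rw [degree_nodal, card_compl, card_image_of_injective _ hk, card_univ, card_univ,
      Fintype.card_fin, Fintype.card_fin, Fintype.card_fin]
    exact_mod_cast (by omega : t - r < s)
  have hsum (z : F) (hz : ∀ i, z ≠ x (l i)) :
      ∑ i, nodalWeight univ (x ∘ l) i * (nodal K y).eval (x (l i)) * (x (l i) - z)⁻¹ =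
        -((nodal K y).eval z / (nodal univ (x ∘ l)).eval z) :=
    sum_nodalWeight_mul_eval_mul_inv_sub hnodes hdeg fun i _ => hz i
  have hK {kk : Fin t} : kk ∈ K ↔ kk ∉ Set.range k := by simp [K]
  refine ⟨fun i => nodalWeight univ (x ∘ l) i * (nodal K y).eval (x (l i)),
    fun i => ?_, fun kk hkk => ?_, fun j => ?_⟩
  · exact mul_ne_zero (nodalWeight_ne_zero hnodes (mem_univ i))
      (eval_nodal_not_at_node fun kk _ => hxy (l i) kk)
  · refine (hsum (y kk) fun i => (hxy (l i) kk).symm).trans ?_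
    rw [eval_nodal_at_node (hK.2 hkk), zero_div, neg_zero]
  · refine (hsum (y (k j)) fun i => (hxy (l i) (k j)).symm).trans_ne (neg_ne_zero.2 ?_)
    exact div_ne_zero (eval_nodal_not_at_node fun kk hkk h => hK.1 hkk ⟨j, hy h⟩)
      (eval_nodal_not_at_node fun i _ => (hxy (l i) (k j)).symm)

/-- **Coefficient-existence lemma for partial interference alignment.** Let
`x_1, …, x_m, y_1, …, y_t` be `t + m` pairwise distinct elements of a field `F`, and
let `{k_1, …, k_r} ⊆ {1, …, t}` and `{l_1, …, l_s} ⊆ {1, …, m}` (with `s ≥ 1` and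
`r + s = t + 1`). Then there exist nonzero scalars `c_1, …, c_s` such that
`Σ_i c_i·(x_{l_i} − y_k)⁻¹ = 0` for every `k ∉ {k_1, …, k_r}`, while
`Σ_i c_i·(x_{l_i} − y_{k_j})⁻¹ ≠ 0` for every `j`. -/
theorem exists_alignment_coefficients (F : Type) [Field F] (t m : ℕ)
    (ht : 1 ≤ t) (hm : 1 ≤ m)
    (x : Fin m → F) (y : Fin t → F)
    (hx : Function.Injective x) (hy : Function.Injective y)
    (hxy : ∀ i j, x i ≠ y j)
    (r s : ℕ) (hs : 1 ≤ s) (hrs : r + s = t + 1)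
    (k : Fin r → Fin t) (hk : Function.Injective k)
    (l : Fin s → Fin m) (hl : Function.Injective l) :
    ∃ c : Fin s → F, (∀ i, c i ≠ 0) ∧
      (∀ kk : Fin t, kk ∉ Set.range k → ∑ i, c i * (x (l i) - y kk)⁻¹ = 0) ∧
      (∀ j : Fin r, ∑ i, c i * (x (l i) - y (k j))⁻¹ ≠ 0) :=
  exists_alignment_coefficients_general F t m x y hx hy hxy r s hs hrs k hk l hl
end

section
/- Let F be a field, 1 ≤ L ≤ D integers and R ≥ 0. Let V be an L×D matrix over F with rank L, and let Λ be a (D−L)×D matrix over F with rank D−L and Λ·Vᵀ = 0 (a parity-check matrix of the code generated by V). Let h_1 < h_2 < … < h_D be indices in {1,…,D+R}, and let H be a (D−L)×(D+R) matrix over F with rank D−L whose column submatrix at positions h_1,…,h_D equals Λ. Let G be an (L+R)×(D+R) matrix over F with rank L+R and H·Gᵀ = 0. Define V̂ as the L×(D+R) matrix whose column at position h_j equals the j-th column of V for each j ∈ {1,…,D}, and whose all other columns are zero. Then the row space of V̂ is contained in the row space of G; equivalently, there exists an L×(L+R) matrix E over F with E·G = V̂. -/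
/-!
The rows of `G` lie in the kernel of `H`, and `rank G + rank H = D + R`, so they span that
kernel. The rows of `V̂` lie in it as well: `V̂` vanishes off the positions `h_j`, where `H`
restricts to `Λ` and `V̂` to `V`, so `H·V̂ᵀ = Λ·Vᵀ = 0`.
-/

open Matrix

namespace Matrix

theorem mul_transpose_eq_submatrix_of_support_subset_range {R k m n ι : Type*}
    [NonUnitalNonAssocSemiring R] [Fintype n] [Fintype ι]
    (A : Matrix m n R) (B : Matrix k n R) (e : ι → n) (he : Function.Injective e)
    (hB : ∀ i c, c ∉ Set.range e → B i c = 0) :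
    A * Bᵀ = A.submatrix id e * (B.submatrix id e)ᵀ := by
  ext i l
  simp only [mul_apply, transpose_apply, submatrix_apply, id]
  exact (Fintype.sum_of_injective e he _ _ (fun c hc => by rw [hB l c hc, mul_zero])
    fun _ => rfl).symm

variable {F k m n p : Type*} [Field F] [Fintype k] [Fintype n]

theorem range_vecMulLinear_eq_ker_mulVecLin (A : Matrix m n F) (G : Matrix k n F)
    (hAG : A * Gᵀ = 0) (hrank : G.rank + A.rank = Fintype.card n) :
    LinearMap.range G.vecMulLinear = LinearMap.ker A.mulVecLin := by
  refine Submodule.eq_of_le_of_finrank_eq ?_ ?_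
  · rintro _ ⟨x, rfl⟩
    rw [LinearMap.mem_ker, mulVecLin_apply, vecMulLinear_apply, ← mulVec_transpose,
      mulVec_mulVec, hAG, zero_mulVec]
  · have hdim := A.mulVecLin.finrank_range_add_finrank_ker
    rw [Module.finrank_fintype_fun_eq_card] at hdim
    rw [← rank_transpose G, rank, mulVecLin_transpose, rank] at hrank
    omega

theorem exists_mul_eq_of_mul_transpose_eq_zero (A : Matrix m n F) (G : Matrix k n F)
    (B : Matrix p n F) (hAG : A * Gᵀ = 0) (hrank : G.rank + A.rank = Fintype.card n)
    (hAB : A * Bᵀ = 0) : ∃ E : Matrix p k F, E * G = B := by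
  have hrow : ∀ i, B i ∈ LinearMap.range G.vecMulLinear := fun i => by
    rw [range_vecMulLinear_eq_ker_mulVecLin A G hAG hrank, LinearMap.mem_ker]
    exact funext fun j => congrFun (congrFun hAB j) i
  choose x hx using hrow
  exact ⟨of x, funext hx⟩

end Matrix

theorem vhat_row_space_le_row_space_general (F : Type) [Field F] (L D R : ℕ)
    (hLD : L ≤ D)
    (V : Matrix (Fin L) (Fin D) F)
    (Lam : Matrix (Fin (D - L)) (Fin D) F)
    (hLamV : Lam * Vᵀ = 0)
    (h : Fin D → Fin (D + R)) (hmono : StrictMono h)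
    (Hm : Matrix (Fin (D - L)) (Fin (D + R)) F) (hHmRank : Hm.rank = D - L)
    (hHmCol : ∀ i j, Hm i (h j) = Lam i j)
    (G : Matrix (Fin (L + R)) (Fin (D + R)) F) (hGrank : G.rank = L + R)
    (hHG : Hm * Gᵀ = 0)
    (Vhat : Matrix (Fin L) (Fin (D + R)) F)
    (hVhat1 : ∀ l j, Vhat l (h j) = V l j)
    (hVhat2 : ∀ l c, (∀ j, h j ≠ c) → Vhat l c = 0) :
    ∃ E : Matrix (Fin L) (Fin (L + R)) F, E * G = Vhat := by
  have hHmVhat : Hm * Vhatᵀ = 0 := by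
    rw [mul_transpose_eq_submatrix_of_support_subset_range Hm Vhat h hmono.injective
      fun l c hc => hVhat2 l c fun j hj => hc ⟨j, hj⟩]
    convert hLamV using 2 <;> ext <;> simp [hHmCol, hVhat1]
  refine exists_mul_eq_of_mul_transpose_eq_zero Hm G Vhat hHG ?_ hHmVhat
  rw [hGrank, hHmRank, Fintype.card_fin]
  omega

/-- **Recoverability step of GPC-PIA for `L > S`.** Let `V` be an `L × D` matrix of
rank `L`, let `Λ` be a `(D−L) × D` parity-check matrix of the code generated by `V`
(full rank, `Λ·Vᵀ = 0`), let `h_1 < … < h_D` be positions in `{1, …, D+R}`, let `H` be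
a full-rank `(D−L) × (D+R)` matrix whose column submatrix at positions `h_1, …, h_D`
equals `Λ`, and let `G` be a full-rank `(L+R) × (D+R)` matrix with `H·Gᵀ = 0`.
If `V̂` is the `L × (D+R)` matrix placing the `j`-th column of `V` at position `h_j`
and zeros elsewhere, then the row space of `V̂` is contained in the row space of `G`:
there exists an `L × (L+R)` matrix `E` with `E·G = V̂`. -/
theorem vhat_row_space_le_row_space (F : Type) [Field F] (L D R : ℕ)
    (hL : 1 ≤ L) (hLD : L ≤ D)
    (V : Matrix (Fin L) (Fin D) F) (hVrank : V.rank = L)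
    (Lam : Matrix (Fin (D - L)) (Fin D) F) (hLamRank : Lam.rank = D - L)
    (hLamV : Lam * Vᵀ = 0)
    (h : Fin D → Fin (D + R)) (hmono : StrictMono h)
    (Hm : Matrix (Fin (D - L)) (Fin (D + R)) F) (hHmRank : Hm.rank = D - L)
    (hHmCol : ∀ i j, Hm i (h j) = Lam i j)
    (G : Matrix (Fin (L + R)) (Fin (D + R)) F) (hGrank : G.rank = L + R)
    (hHG : Hm * Gᵀ = 0)
    (Vhat : Matrix (Fin L) (Fin (D + R)) F)
    (hVhat1 : ∀ l j, Vhat l (h j) = V l j)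
    (hVhat2 : ∀ l c, (∀ j, h j ≠ c) → Vhat l c = 0) :
    ∃ E : Matrix (Fin L) (Fin (L + R)) F, E * G = Vhat :=
  vhat_row_space_le_row_space_general F L D R hLD V Lam hLamV h hmono Hm hHmRank hHmCol G hGrank hHG
    Vhat hVhat1 hVhat2
end
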